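/- Given a cell average Ū with ρ̄ > 0 and 𝓔(Ū) > 0, and a candidate cell-center state Ũᶜ, the two-step Zhang–Shu scaling limiter producing Ǔᶜ = θ₂(Ũ̃ᶜ − Ū) + Ū, where Ũ̃ᶜ = θ₁(Ũᶜ − Ū) + Ū with θ₁ = min{1, (ρ̄ − ε₁)/(ρ̄ − ρ̃ᶜ)} (when ρ̃ᶜ < ε₁, else θ₁ = 1), ε₁ = min{10⁻¹³, ρ̄}, and θ₂ = min{1, (𝓔(Ū) − ε₂)/(𝓔(Ū) − 𝓔(Ũ̃ᶜ))} (when 𝓔(Ũ̃ᶜ) < ε₂, else θ₂ = 1), ε₂ = min{10⁻¹³, 𝓔(Ū)}, satisfies ρ̌ᶜ ≥ ε₁ > 0 and 𝓔(Ǔᶜ) ≥ ε₂ > 0; in particular Ǔᶜ lies in the admissible set G. -/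

import Mathlib

/-!
Both limiting steps pull the state towards the admissible average `Ū` along a segment. Density is
affine on that segment, and `𝓔` is concave on it as long as both endpoints have positive density
(`m²/(2ρ)` is the perspective of a convex function), so along the segment each quantity stays above
the chord between its endpoint values. The factor `θ` is chosen exactly so that the chord reaches
the threshold `ε`.
-/

open scoped BigOperators

noncomputable section

/-- An ideal MHD state `U = (ρ, m, B, E)`. -/
structure MHDState where
  ρ : ℝ
  m : Fin 3 → ℝ
  B : Fin 3 → ℝ
  E : ℝ

/-- Internal energy `𝓔(U) = E − |m|²/(2ρ) − |B|²/2`. -/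
def MHDState.ie (U : MHDState) : ℝ :=
  U.E - (∑ i, U.m i ^ 2) / (2 * U.ρ) - (∑ i, U.B i ^ 2) / 2

/-- The scaling-limiter blend `θ (U − Ū) + Ū`. -/
def blend (θ : ℝ) (U Ub : MHDState) : MHDState :=
  ⟨θ * (U.ρ - Ub.ρ) + Ub.ρ,
   fun i => θ * (U.m i - Ub.m i) + Ub.m i,
   fun i => θ * (U.B i - Ub.B i) + Ub.B i,
   θ * (U.E - Ub.E) + Ub.E⟩

section Scalar

variable {θ : ℝ}

lemma lt_mul_sub_add {ε a b : ℝ} (hθ0 : 0 ≤ θ) (hθ1 : θ ≤ 1) (ha : ε < a) (hb : ε < b) :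
    ε < θ * (a - b) + b := by
  nlinarith [mul_nonneg hθ0 (sub_pos.2 ha).le, mul_nonneg (sub_nonneg.2 hθ1) (sub_pos.2 hb).le]

lemma le_mul_sub_add {ε a b : ℝ} (hθ0 : 0 ≤ θ) (hθ1 : θ ≤ 1) (ha : ε ≤ a) (hb : ε ≤ b) :
    ε ≤ θ * (a - b) + b := by
  nlinarith [mul_nonneg hθ0 (sub_nonneg.2 ha), mul_nonneg (sub_nonneg.2 hθ1) (sub_nonneg.2 hb)]

lemma sq_mul_sub_add_le (a b : ℝ) (hθ0 : 0 ≤ θ) (hθ1 : θ ≤ 1) :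
    (θ * (a - b) + b) ^ 2 ≤ θ * (a ^ 2 - b ^ 2) + b ^ 2 := by
  nlinarith [mul_nonneg (mul_nonneg hθ0 (sub_nonneg.2 hθ1)) (sq_nonneg (a - b))]

lemma sq_div_mul_sub_add_le (a b : ℝ) {ρ₁ ρ₂ : ℝ} (hθ0 : 0 ≤ θ) (hθ1 : θ ≤ 1)
    (hρ₁ : 0 < ρ₁) (hρ₂ : 0 < ρ₂) :
    (θ * (a - b) + b) ^ 2 / (2 * (θ * (ρ₁ - ρ₂) + ρ₂)) ≤
      θ * (a ^ 2 / (2 * ρ₁) - b ^ 2 / (2 * ρ₂)) + b ^ 2 / (2 * ρ₂) := by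
  have hρ : 0 < θ * (ρ₁ - ρ₂) + ρ₂ := lt_mul_sub_add hθ0 hθ1 hρ₁ hρ₂
  have hgap : θ * (a ^ 2 / (2 * ρ₁) - b ^ 2 / (2 * ρ₂)) + b ^ 2 / (2 * ρ₂) -
      (θ * (a - b) + b) ^ 2 / (2 * (θ * (ρ₁ - ρ₂) + ρ₂)) =
      θ * (1 - θ) * (a * ρ₂ - b * ρ₁) ^ 2 / (2 * ρ₁ * ρ₂ * (θ * (ρ₁ - ρ₂) + ρ₂)) := by
    field_simp
    ring
  have : 0 ≤ θ * (1 - θ) * (a * ρ₂ - b * ρ₁) ^ 2 / (2 * ρ₁ * ρ₂ * (θ * (ρ₁ - ρ₂) + ρ₂)) := by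
    have := sub_nonneg.2 hθ1
    positivity
  linarith

end Scalar

theorem MHDState.ie_blend_ge {θ : ℝ} {U V : MHDState} (hθ0 : 0 ≤ θ) (hθ1 : θ ≤ 1)
    (hU : 0 < U.ρ) (hV : 0 < V.ρ) :
    θ * (U.ie - V.ie) + V.ie ≤ (blend θ U V).ie := by
  have hkin : (∑ i, (blend θ U V).m i ^ 2) / (2 * (blend θ U V).ρ) ≤
      θ * ((∑ i, U.m i ^ 2) / (2 * U.ρ) - (∑ i, V.m i ^ 2) / (2 * V.ρ)) +
        (∑ i, V.m i ^ 2) / (2 * V.ρ) := by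
    simp only [blend, Finset.sum_div, ← Finset.sum_sub_distrib, Finset.mul_sum,
      ← Finset.sum_add_distrib]
    exact Finset.sum_le_sum fun i _ => sq_div_mul_sub_add_le _ _ hθ0 hθ1 hU hV
  have hmag : ∑ i, (blend θ U V).B i ^ 2 ≤
      θ * (∑ i, U.B i ^ 2 - ∑ i, V.B i ^ 2) + ∑ i, V.B i ^ 2 := by
    simp only [blend, ← Finset.sum_sub_distrib, Finset.mul_sum, ← Finset.sum_add_distrib]
    exact Finset.sum_le_sum fun i _ => sq_mul_sub_add_le _ _ hθ0 hθ1
  simp only [MHDState.ie] at hkin ⊢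
  simp only [blend] at hkin hmag ⊢
  linarith

/-- The Zhang–Shu scaling factor for a quantity with average value `a`, candidate value `c` and
threshold `ε`. -/
def limiterFactor (ε a c : ℝ) : ℝ :=
  if c < ε then min 1 ((a - ε) / (a - c)) else 1

section limiterFactor

variable {ε a c : ℝ}

lemma limiterFactor_nonneg (hεa : ε ≤ a) : 0 ≤ limiterFactor ε a c := by
  unfold limiterFactor
  split_ifs with hc
  · exact le_min zero_le_one (div_nonneg (by linarith) (by linarith))
  · exact zero_le_one

lemma limiterFactor_le_one : limiterFactor ε a c ≤ 1 := by
  unfold limiterFactor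
  split_ifs
  · exact min_le_left _ _
  · exact le_rfl

lemma le_limiterFactor_mul_sub_add (hεa : ε ≤ a) :
    ε ≤ limiterFactor ε a c * (c - a) + a := by
  unfold limiterFactor
  split_ifs with hc
  · have hac : 0 < a - c := by linarith
    rw [min_eq_right ((div_le_one hac).2 (by linarith))]
    field_simp
    linarith
  · linarith

end limiterFactor

/-- The two-step Zhang–Shu scaling limiter produces a cell-center state with
density `≥ ε₁ > 0` and internal energy `≥ ε₂ > 0`; in particular it is admissible. -/
theorem zhang_shu_limiter_admissible (Ub Uc : MHDState)
    (hρ : 0 < Ub.ρ) (hE : 0 < Ub.ie) :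
    let ε₁ : ℝ := min (10 ^ (-(13 : ℤ))) Ub.ρ
    let θ₁ : ℝ := if Uc.ρ < ε₁ then min 1 ((Ub.ρ - ε₁) / (Ub.ρ - Uc.ρ)) else 1
    let Ucc : MHDState := blend θ₁ Uc Ub
    let ε₂ : ℝ := min (10 ^ (-(13 : ℤ))) Ub.ie
    let θ₂ : ℝ := if Ucc.ie < ε₂ then min 1 ((Ub.ie - ε₂) / (Ub.ie - Ucc.ie)) else 1
    let Uch : MHDState := blend θ₂ Ucc Ub
    Uch.ρ ≥ ε₁ ∧ 0 < ε₁ ∧ Uch.ie ≥ ε₂ ∧ 0 < ε₂ ∧ 0 < Uch.ρ ∧ 0 < Uch.ie := by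
  intro ε₁ θ₁ Ucc ε₂ θ₂ Uch
  have hε₁ : 0 < ε₁ := lt_min (by norm_num) hρ
  have hε₁ρ : ε₁ ≤ Ub.ρ := min_le_right _ _
  have hε₂ : 0 < ε₂ := lt_min (by norm_num) hE
  have hε₂E : ε₂ ≤ Ub.ie := min_le_right _ _
  have hUcc : ε₁ ≤ Ucc.ρ := le_limiterFactor_mul_sub_add hε₁ρ
  have hθ₂0 : 0 ≤ θ₂ := limiterFactor_nonneg hε₂E
  have hUchρ : ε₁ ≤ Uch.ρ := le_mul_sub_add hθ₂0 limiterFactor_le_one hUcc hε₁ρ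
  have hUchE : ε₂ ≤ Uch.ie :=
    (le_limiterFactor_mul_sub_add hε₂E).trans
      (MHDState.ie_blend_ge hθ₂0 limiterFactor_le_one (hε₁.trans_le hUcc) hρ)
  exact ⟨hUchρ, hε₁, hUchE, hε₂, hε₁.trans_le hUchρ, hε₂.trans_le hUchE⟩

end
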